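/- Validity criterion via density (Parry). In the piecewise monotone setting, the φ-expansion is valid if and only if the set S is dense in [0,1]. Moreover, defining φ on dom φ := ⋃_{j∈A} (j + J_j) by φ(j+t) := f_j^{−1}(t) for t ∈ J_j, if φ is differentiable on its domain and sup_{t ∈ dom φ} |φ′(t)| < 1, then the φ-expansion is valid. -/

import Mathlib

open Set Filter Topology

/-- A piecewise monotone dynamical system on `[0,1]`: partition points
`0 = a 0 < a 1 < ⋯ < a k = 1` (`k ≥ 2`), branch intervals `I j = (a j, a (j+1))`,
on each of which `f j` is a continuous strictly monotone map into `[0,1]` with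
inverse `g j`; `inc j` records whether `f j` is increasing; the covering condition
`(⋃ᵢ Jᵢ) ∩ I j = I j` (i.e. `I j ⊆ ⋃ᵢ Jᵢ`) holds, where `J i = f i '' I i`. -/
structure PMS where
  k : ℕ
  a : ℕ → ℝ
  f : ℕ → ℝ → ℝ
  g : ℕ → ℝ → ℝ
  inc : ℕ → Bool
  two_le_k : 2 ≤ k
  a_zero : a 0 = 0
  a_last : a k = 1
  a_mono : ∀ i j, i < j → j ≤ k → a i < a j
  f_cont : ∀ j, j < k → ContinuousOn (f j) (Icc (a j) (a (j + 1)))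
  f_mono : ∀ j, j < k → inc j = true → StrictMonoOn (f j) (Icc (a j) (a (j + 1)))
  f_anti : ∀ j, j < k → inc j = false → StrictAntiOn (f j) (Icc (a j) (a (j + 1)))
  f_range : ∀ j, j < k → MapsTo (f j) (Icc (a j) (a (j + 1))) (Icc (0 : ℝ) 1)
  g_inv : ∀ j, j < k → ∀ t ∈ Icc (a j) (a (j + 1)), g j (f j t) = t
  cover : ∀ j, j < k →
    Ioo (a j) (a (j + 1)) ⊆ ⋃ i ∈ Finset.range k, f i '' Ioo (a i) (a (i + 1))

namespace PMS

/-- The open branch interval `I j = (a j, a (j+1))`. -/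
def I (P : PMS) (j : ℕ) : Set ℝ := Ioo (P.a j) (P.a (j + 1))

open Classical in
/-- The index of the branch interval containing `x` (junk value `0` if there is none). -/
noncomputable def idx (P : PMS) (x : ℝ) : ℕ :=
  if h : ∃ j, j < P.k ∧ x ∈ P.I j then h.choose else 0

open Classical in
/-- The dynamics: `T x = f j x` for `x ∈ I j` (junk value `0` on `S₀`, where `T` is
left undefined in the paper). -/
noncomputable def T (P : PMS) (x : ℝ) : ℝ :=
  if ∃ j, j < P.k ∧ x ∈ P.I j then P.f (P.idx x) x else 0

/-- `S₀ = [0,1] ∖ ⋃ⱼ I j`. -/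
def S0 (P : PMS) : Set ℝ := Icc 0 1 \ ⋃ j ∈ Finset.range P.k, P.I j

/-- The singular set `S`: points whose orbit hits `S₀`. -/
def S (P : PMS) : Set ℝ :=
  {x ∈ Icc (0 : ℝ) 1 | ∃ m, P.T^[m] x ∈ P.S0 ∧ ∀ i, i < m → P.T^[i] x ∉ P.S0}

/-- The coding map (itinerary): `(code x) n = j` iff `Tⁿ x ∈ I j` (for `x ∈ [0,1] ∖ S`). -/
noncomputable def code (P : PMS) (x : ℝ) : ℕ → ℕ := fun n => P.idx (P.T^[n] x)

/-- The map `φ̄` on `[0,k]` as a function of `j ∈ A` and `t ∈ [0,1]`, a point of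
`[j, j+1]` being written `j + t`. -/
noncomputable def phibarJ (P : PMS) (j : ℕ) (t : ℝ) : ℝ :=
  if P.inc j then
    if t ≤ P.f j (P.a j) then P.a j
    else if P.f j (P.a (j + 1)) ≤ t then P.a (j + 1)
    else P.g j t
  else
    if t ≤ P.f j (P.a (j + 1)) then P.a (j + 1)
    else if P.f j (P.a j) ≤ t then P.a j
    else P.g j t

/-- `φ̄ₙ(x) = φ̄(x₀ + φ̄(x₁ + ⋯ + φ̄(x_{n-1})⋯))`. -/
noncomputable def phibarN (P : PMS) : ℕ → (ℕ → ℕ) → ℝ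
  | 0, _ => 0
  | n + 1, x => P.phibarJ (x 0) (P.phibarN n fun i => x (i + 1))

/-- `φ̄_∞(x) = limₙ φ̄ₙ(x)` (a junk value where the limit does not exist). -/
noncomputable def phibarInf (P : PMS) (x : ℕ → ℕ) : ℝ :=
  limUnder atTop fun n => P.phibarN n x

/-- The φ-expansion is well-defined: `limₙ φ̄ₙ(x)` exists for every string `x ∈ A^ℕ`. -/
def WellDefined (P : PMS) : Prop :=
  ∀ x : ℕ → ℕ, (∀ n, x n < P.k) →
    ∃ L : ℝ, Tendsto (fun n => P.phibarN n x) atTop (𝓝 L)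

/-- The φ-expansion is valid: for every `x ∈ [0,1] ∖ S`, `limₙ φ̄ₙ(i(x)) = x`. -/
def Valid (P : PMS) : Prop :=
  ∀ x ∈ Icc (0 : ℝ) 1 \ P.S,
    Tendsto (fun n => P.phibarN n (P.code x)) atTop (𝓝 x)

end PMS

namespace PMS

/-- The domain of `φ`: `dom φ = ⋃ⱼ (j + J j)`, where `J j = f j '' I j`. -/
def domPhi (P : PMS) : Set ℝ :=
  ⋃ j ∈ Finset.range P.k, (fun t => (j : ℝ) + t) '' (P.f j '' P.I j)

open Classical in
/-- The index `j` such that `x ∈ j + J j` (junk value `0` if there is none). -/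
noncomputable def phiIdx (P : PMS) (x : ℝ) : ℕ :=
  if h : ∃ j, j < P.k ∧ x - (j : ℝ) ∈ P.f j '' P.I j then h.choose else 0

/-- The map `φ` on `dom φ`: `φ(j + t) = f j ⁻¹ (t)` for `t ∈ J j`. -/
noncomputable def phiMap (P : PMS) (x : ℝ) : ℝ :=
  P.g (P.phiIdx x) (x - (P.phiIdx x : ℝ))

end PMS

/-!
Each `φ̄ⱼ` is a monotone or antitone left inverse of the branch `fⱼ`, so along the itinerary
of a point `x ∉ S` the maps `t ↦ φ̄(x₀ + ⋯ + φ̄(x_{n-1} + t))` send `[0,1]` onto nested intervals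
containing `x`. A point strictly inside all of them has the itinerary of `x` and so avoids `S`:
the intervals shrink to `x` as soon as `S` is dense. Conversely, on an interval free of `S` every
`Tⁿ` is continuous with image inside one branch interval, so all its points share an itinerary
and the expansion cannot recover them. If `|φ'| ≤ c < 1`, then `|s - s'| ≤ c |fⱼ s - fⱼ s'|`
on each branch; since `fⱼ ∘ φ̄ⱼ` is the projection onto the closure of `Jⱼ`, every `φ̄ⱼ` is
`c`-Lipschitz, and the nested intervals have length at most `cⁿ`.
-/

lemma mem_uIoo_of_map_mem_uIoo {F : ℝ → ℝ} (hF : Monotone F ∨ Antitone F) {s s' z : ℝ}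
    (hz : F z ∈ uIoo (F s) (F s')) : z ∈ uIoo s s' := by
  rcases hF with hF | hF
  · rw [uIoo, ← hF.map_min, ← hF.map_max] at hz
    exact ⟨hF.reflect_lt hz.1, hF.reflect_lt hz.2⟩
  · rw [uIoo, ← hF.map_max, ← hF.map_min] at hz
    exact ⟨hF.reflect_lt hz.2, hF.reflect_lt hz.1⟩

lemma abs_sub_le_mul_abs_sub_of_Ioo {F : ℝ → ℝ} {a b c : ℝ} (hab : a < b)
    (hF : ContinuousOn F (Icc a b))
    (h : ∀ s ∈ Ioo a b, ∀ s' ∈ Ioo a b, |s - s'| ≤ c * |F s - F s'|) :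
    ∀ s ∈ Icc a b, ∀ s' ∈ Icc a b, |s - s'| ≤ c * |F s - F s'| := by
  have hcl : closure (Ioo a b ×ˢ Ioo a b) = Icc a b ×ˢ Icc a b := by
    rw [closure_prod_eq, closure_Ioo hab.ne]
  have hF₁ : ContinuousOn (fun p : ℝ × ℝ => F p.1) (Icc a b ×ˢ Icc a b) :=
    hF.comp continuousOn_fst fun p hp => hp.1
  have hF₂ : ContinuousOn (fun p : ℝ × ℝ => F p.2) (Icc a b ×ˢ Icc a b) :=
    hF.comp continuousOn_snd fun p hp => hp.2
  intro s hs s' hs'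
  refine le_on_closure (f := fun p : ℝ × ℝ => |p.1 - p.2|)
    (g := fun p => c * |F p.1 - F p.2|) (fun p hp => h _ hp.1 _ hp.2) ?_ ?_
    (hcl ▸ ⟨hs, hs'⟩ : (s, s') ∈ closure (Ioo a b ×ˢ Ioo a b))
  · exact (continuous_fst.sub continuous_snd).abs.continuousOn
  · rw [hcl]
    exact continuousOn_const.mul (hF₁.sub hF₂).abs

lemma tendsto_of_monotone_of_antitone_of_gap {L R : ℕ → ℝ} {x : ℝ} (hL : Monotone L)
    (hR : Antitone R) (hx : ∀ n, L n ≤ x ∧ x ≤ R n)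
    (hgap : ∀ u v, (∀ n, L n ≤ u ∧ v ≤ R n) → v ≤ u) :
    Tendsto L atTop (𝓝 x) ∧ Tendsto R atTop (𝓝 x) := by
  have hLb : BddAbove (range L) := ⟨x, forall_mem_range.2 fun n => (hx n).1⟩
  have hRb : BddBelow (range R) := ⟨x, forall_mem_range.2 fun n => (hx n).2⟩
  have hsup : ⨆ n, L n ≤ x := ciSup_le fun n => (hx n).1
  have hinf : x ≤ ⨅ n, R n := le_ciInf fun n => (hx n).2
  have h := hgap _ _ fun n => ⟨le_ciSup hLb n, ciInf_le hRb n⟩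
  have hsup' : ⨆ n, L n = x := by linarith
  have hinf' : ⨅ n, R n = x := by linarith
  exact ⟨hsup' ▸ tendsto_atTop_ciSup hL hLb, hinf' ▸ tendsto_atTop_ciInf hR hRb⟩

namespace PMS

variable (P : PMS)

lemma a_le_a {i j : ℕ} (hij : i ≤ j) (hj : j ≤ P.k) : P.a i ≤ P.a j := by
  rcases hij.lt_or_eq with h | rfl
  · exact (P.a_mono i j h hj).le
  · exact le_rfl

lemma a_lt_a_succ {j : ℕ} (hj : j < P.k) : P.a j < P.a (j + 1) :=
  P.a_mono j (j + 1) j.lt_succ_self hj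

lemma a_mem_Icc {j : ℕ} (hj : j ≤ P.k) : P.a j ∈ Icc (0 : ℝ) 1 :=
  ⟨P.a_zero ▸ P.a_le_a j.zero_le hj, P.a_last ▸ P.a_le_a hj le_rfl⟩

lemma Icc_a_subset {j : ℕ} (hj : j < P.k) : Icc (P.a j) (P.a (j + 1)) ⊆ Icc (0 : ℝ) 1 :=
  Icc_subset_Icc (P.a_mem_Icc hj.le).1 (P.a_mem_Icc hj).2

lemma I_subset_Icc {j : ℕ} (hj : j < P.k) : P.I j ⊆ Icc (0 : ℝ) 1 :=
  Ioo_subset_Icc_self.trans (P.Icc_a_subset hj)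

lemma eq_of_mem_I {i j : ℕ} (hi : i < P.k) (hj : j < P.k) {x : ℝ}
    (hxi : x ∈ P.I i) (hxj : x ∈ P.I j) : i = j := by
  by_contra hne
  rcases Nat.lt_or_gt_of_ne hne with h | h
  · exact (hxj.1.trans hxi.2).not_ge (P.a_le_a h hj.le)
  · exact (hxi.1.trans hxj.2).not_ge (P.a_le_a h hi.le)

lemma mem_S0_iff {x : ℝ} : x ∈ P.S0 ↔ x ∈ Icc (0 : ℝ) 1 ∧ ∀ j < P.k, x ∉ P.I j := by
  simp [S0]

lemma exists_mem_I_of_notMem_S0 {x : ℝ} (hx : x ∈ Icc (0 : ℝ) 1) (hx0 : x ∉ P.S0) :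
    ∃ j < P.k, x ∈ P.I j := by
  simpa [P.mem_S0_iff, hx] using hx0

lemma notMem_S0_of_mem_I {j : ℕ} (hj : j < P.k) {x : ℝ} (hx : x ∈ P.I j) : x ∉ P.S0 :=
  fun h => (P.mem_S0_iff.1 h).2 j hj hx

lemma idx_eq {j : ℕ} (hj : j < P.k) {x : ℝ} (hx : x ∈ P.I j) : P.idx x = j := by
  have h : ∃ i, i < P.k ∧ x ∈ P.I i := ⟨j, hj, hx⟩
  rw [idx, dif_pos h]
  exact P.eq_of_mem_I h.choose_spec.1 hj h.choose_spec.2 hx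

lemma T_eq {j : ℕ} (hj : j < P.k) {x : ℝ} (hx : x ∈ P.I j) : P.T x = P.f j x := by
  rw [T, if_pos ⟨j, hj, hx⟩, P.idx_eq hj hx]

lemma continuousOn_T {j : ℕ} (hj : j < P.k) : ContinuousOn P.T (P.I j) :=
  ((P.f_cont j hj).mono Ioo_subset_Icc_self).congr fun _ hx => P.T_eq hj hx

lemma S0_subset_S : P.S0 ⊆ P.S := fun _ hx =>
  ⟨hx.1, 0, hx, fun i hi => absurd hi i.not_lt_zero⟩

lemma zero_mem_S : (0 : ℝ) ∈ P.S :=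
  P.S0_subset_S <| P.mem_S0_iff.2
    ⟨⟨le_rfl, zero_le_one⟩, fun _ hj h => h.1.not_ge (P.a_mem_Icc hj.le).1⟩

lemma one_mem_S : (1 : ℝ) ∈ P.S :=
  P.S0_subset_S <| P.mem_S0_iff.2
    ⟨⟨zero_le_one, le_rfl⟩, fun _ hj h => h.2.not_ge (P.a_mem_Icc hj).2⟩

lemma mem_Icc_diff_S_iff {x : ℝ} :
    x ∈ Icc (0 : ℝ) 1 \ P.S ↔ ∀ n, ∃ j < P.k, P.T^[n] x ∈ P.I j := by
  constructor
  · rintro ⟨hx, hxS⟩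
    have hS0 : ∀ n, P.T^[n] x ∉ P.S0 := by
      intro n hn
      classical
      have hex : ∃ m, P.T^[m] x ∈ P.S0 := ⟨n, hn⟩
      exact hxS ⟨hx, Nat.find hex, Nat.find_spec hex, fun i hi => Nat.find_min hex hi⟩
    have hIcc : ∀ n, P.T^[n] x ∈ Icc (0 : ℝ) 1 := by
      intro n
      induction n with
      | zero => exact hx
      | succ n ih =>
        obtain ⟨j, hj, hxj⟩ := P.exists_mem_I_of_notMem_S0 ih (hS0 n)
        rw [Function.iterate_succ_apply', P.T_eq hj hxj]
        exact P.f_range j hj (Ioo_subset_Icc_self hxj)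
    exact fun n => P.exists_mem_I_of_notMem_S0 (hIcc n) (hS0 n)
  · intro h
    obtain ⟨j, hj, hxj⟩ := h 0
    refine ⟨P.I_subset_Icc hj hxj, fun ⟨_, m, hm, _⟩ => ?_⟩
    obtain ⟨i, hi, hmi⟩ := h m
    exact P.notMem_S0_of_mem_I hi hmi hm

lemma code_spec {x : ℝ} (hx : x ∈ Icc (0 : ℝ) 1 \ P.S) (n : ℕ) :
    P.code x n < P.k ∧ P.T^[n] x ∈ P.I (P.code x n) := by
  obtain ⟨j, hj, hxj⟩ := P.mem_Icc_diff_S_iff.1 hx n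
  rw [code, P.idx_eq hj hxj]
  exact ⟨hj, hxj⟩

lemma T_mem_Icc_diff_S {x : ℝ} (hx : x ∈ Icc (0 : ℝ) 1 \ P.S) : P.T x ∈ Icc (0 : ℝ) 1 \ P.S :=
  P.mem_Icc_diff_S_iff.2 fun n => by
    rw [← Function.iterate_succ_apply]
    exact P.mem_Icc_diff_S_iff.1 hx (n + 1)

lemma code_T (x : ℝ) : P.code (P.T x) = fun n => P.code x (n + 1) := by
  funext n
  rw [code, code, Function.iterate_succ_apply]

lemma f_strictMonoOn_or_strictAntiOn {j : ℕ} (hj : j < P.k) :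
    StrictMonoOn (P.f j) (Icc (P.a j) (P.a (j + 1))) ∨
      StrictAntiOn (P.f j) (Icc (P.a j) (P.a (j + 1))) := by
  cases h : P.inc j
  · exact .inr (P.f_anti j hj h)
  · exact .inl (P.f_mono j hj h)

lemma f_mem_uIcc {j : ℕ} (hj : j < P.k) {y : ℝ} (hy : y ∈ Icc (P.a j) (P.a (j + 1))) :
    P.f j y ∈ uIcc (P.f j (P.a j)) (P.f j (P.a (j + 1))) := by
  rcases P.f_strictMonoOn_or_strictAntiOn hj with h | h
  · exact Icc_subset_uIcc (h.monotoneOn.mapsTo_Icc hy)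
  · exact Icc_subset_uIcc' (h.antitoneOn.mapsTo_Icc hy)

lemma f_mem_Ioo_zero_one {j : ℕ} (hj : j < P.k) {y : ℝ} (hy : y ∈ P.I j) :
    P.f j y ∈ Ioo (0 : ℝ) 1 := by
  have hab := (P.a_lt_a_succ hj).le
  have h₀ := P.f_range j hj (left_mem_Icc.2 hab)
  have h₁ := P.f_range j hj (right_mem_Icc.2 hab)
  have hy' := Ioo_subset_Icc_self hy
  rcases P.f_strictMonoOn_or_strictAntiOn hj with h | h
  · exact ⟨h₀.1.trans_lt (h (left_mem_Icc.2 hab) hy' hy.1),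
      (h hy' (right_mem_Icc.2 hab) hy.2).trans_le h₁.2⟩
  · exact ⟨h₁.1.trans_lt (h hy' (right_mem_Icc.2 hab) hy.2),
      (h (left_mem_Icc.2 hab) hy' hy.1).trans_le h₀.2⟩

lemma g_mem_Icc_and_f_g {j : ℕ} (hj : j < P.k) {t : ℝ}
    (ht : t ∈ uIcc (P.f j (P.a j)) (P.f j (P.a (j + 1)))) :
    P.g j t ∈ Icc (P.a j) (P.a (j + 1)) ∧ P.f j (P.g j t) = t := by
  have hI : uIcc (P.a j) (P.a (j + 1)) = Icc (P.a j) (P.a (j + 1)) :=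
    uIcc_of_le (P.a_lt_a_succ hj).le
  obtain ⟨s, hs, rfl⟩ := intermediate_value_uIcc (hI ▸ P.f_cont j hj) ht
  rw [hI] at hs
  rw [P.g_inv j hj s hs]
  exact ⟨hs, rfl⟩

/-- The projection onto the closure of `J j`. -/
noncomputable def clampJ (j : ℕ) (t : ℝ) : ℝ :=
  projIcc (P.f j (P.a j) ⊓ P.f j (P.a (j + 1))) (P.f j (P.a j) ⊔ P.f j (P.a (j + 1)))
    inf_le_sup t

lemma clampJ_mem_uIcc (j : ℕ) (t : ℝ) :
    P.clampJ j t ∈ uIcc (P.f j (P.a j)) (P.f j (P.a (j + 1))) :=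
  (projIcc _ _ _ t).2

lemma clampJ_of_mem {j : ℕ} {t : ℝ} (ht : t ∈ uIcc (P.f j (P.a j)) (P.f j (P.a (j + 1)))) :
    P.clampJ j t = t :=
  congrArg Subtype.val (projIcc_of_mem _ ht)

lemma monotone_clampJ (j : ℕ) : Monotone (P.clampJ j) :=
  fun _ _ h => monotone_projIcc _ h

lemma abs_clampJ_sub_le (j : ℕ) (t t' : ℝ) : |P.clampJ j t - P.clampJ j t'| ≤ |t - t'| :=
  abs_projIcc_sub_projIcc _

lemma phibarJ_eq_g_clampJ {j : ℕ} (hj : j < P.k) (t : ℝ) :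
    P.phibarJ j t = P.g j (P.clampJ j t) := by
  have hab := P.a_lt_a_succ hj
  have hA := P.g_inv j hj _ (left_mem_Icc.2 hab.le)
  have hB := P.g_inv j hj _ (right_mem_Icc.2 hab.le)
  cases hinc : P.inc j
  · have hlt := P.f_anti j hj hinc (left_mem_Icc.2 hab.le) (right_mem_Icc.2 hab.le) hab
    simp only [phibarJ, hinc, Bool.false_eq_true, if_false, clampJ, coe_projIcc,
      inf_eq_right.2 hlt.le, sup_eq_left.2 hlt.le]
    split_ifs with h₁ h₂
    · rw [max_eq_left (min_le_of_right_le h₁), hB]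
    · rw [min_eq_left h₂, max_eq_right hlt.le, hA]
    · rw [min_eq_right (not_le.1 h₂).le, max_eq_right (not_le.1 h₁).le]
  · have hlt := P.f_mono j hj hinc (left_mem_Icc.2 hab.le) (right_mem_Icc.2 hab.le) hab
    simp only [phibarJ, hinc, if_true, clampJ, coe_projIcc, inf_eq_left.2 hlt.le,
      sup_eq_right.2 hlt.le]
    split_ifs with h₁ h₂
    · rw [max_eq_left (min_le_of_right_le h₁), hA]
    · rw [min_eq_left h₂, max_eq_right hlt.le, hB]
    · rw [min_eq_right (not_le.1 h₂).le, max_eq_right (not_le.1 h₁).le]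

lemma phibarJ_mem_Icc {j : ℕ} (hj : j < P.k) (t : ℝ) :
    P.phibarJ j t ∈ Icc (P.a j) (P.a (j + 1)) := by
  rw [P.phibarJ_eq_g_clampJ hj]
  exact (P.g_mem_Icc_and_f_g hj (P.clampJ_mem_uIcc j t)).1

lemma f_phibarJ {j : ℕ} (hj : j < P.k) (t : ℝ) : P.f j (P.phibarJ j t) = P.clampJ j t := by
  rw [P.phibarJ_eq_g_clampJ hj]
  exact (P.g_mem_Icc_and_f_g hj (P.clampJ_mem_uIcc j t)).2

lemma phibarJ_f {j : ℕ} (hj : j < P.k) {y : ℝ} (hy : y ∈ Icc (P.a j) (P.a (j + 1))) :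
    P.phibarJ j (P.f j y) = y := by
  rw [P.phibarJ_eq_g_clampJ hj, P.clampJ_of_mem (P.f_mem_uIcc hj hy), P.g_inv j hj y hy]

lemma phibarJ_monotone_or_antitone {j : ℕ} (hj : j < P.k) :
    Monotone (P.phibarJ j) ∨ Antitone (P.phibarJ j) := by
  have hmem := P.phibarJ_mem_Icc hj
  rcases P.f_strictMonoOn_or_strictAntiOn hj with h | h
  · refine .inl fun t t' htt' => ?_
    rw [← StrictMonoOn.le_iff_le h (hmem t) (hmem t'), P.f_phibarJ hj, P.f_phibarJ hj]
    exact P.monotone_clampJ j htt'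
  · refine .inr fun t t' htt' => ?_
    rw [← StrictAntiOn.le_iff_ge h (hmem t) (hmem t'), P.f_phibarJ hj, P.f_phibarJ hj]
    exact P.monotone_clampJ j htt'

lemma mem_I_and_f_mem_uIoo {j : ℕ} (hj : j < P.k) {s s' y : ℝ}
    (hy : y ∈ uIoo (P.phibarJ j s) (P.phibarJ j s')) : y ∈ P.I j ∧ P.f j y ∈ uIoo s s' := by
  have hyI : y ∈ P.I j := uIoo_subset_Ioo (P.phibarJ_mem_Icc hj s) (P.phibarJ_mem_Icc hj s') hy
  refine ⟨hyI, mem_uIoo_of_map_mem_uIoo (P.phibarJ_monotone_or_antitone hj) ?_⟩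
  rwa [P.phibarJ_f hj (Ioo_subset_Icc_self hyI)]

/-- `phibarComp n x t = φ̄(x₀ + φ̄(x₁ + ⋯ + φ̄(x_{n-1} + t)⋯))`. -/
noncomputable def phibarComp : ℕ → (ℕ → ℕ) → ℝ → ℝ
  | 0, _, t => t
  | n + 1, x, t => P.phibarJ (x 0) (phibarComp n (fun i => x (i + 1)) t)

lemma phibarN_eq_phibarComp (n : ℕ) (x : ℕ → ℕ) : P.phibarN n x = P.phibarComp n x 0 := by
  induction n generalizing x with
  | zero => rfl
  | succ n ih => simp only [phibarN, phibarComp, ih]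

lemma phibarComp_succ' (n : ℕ) (x : ℕ → ℕ) (t : ℝ) :
    P.phibarComp (n + 1) x t = P.phibarComp n x (P.phibarJ (x n) t) := by
  induction n generalizing x with
  | zero => rfl
  | succ n ih => exact congrArg (P.phibarJ (x 0)) (ih _)

lemma phibarComp_code_iterate {x : ℝ} (hx : x ∈ Icc (0 : ℝ) 1 \ P.S) (n : ℕ) :
    P.phibarComp n (P.code x) (P.T^[n] x) = x := by
  induction n generalizing x with
  | zero => rfl
  | succ n ih =>
    obtain ⟨hj, hxj : x ∈ P.I (P.code x 0)⟩ := P.code_spec hx 0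
    have e : P.phibarComp (n + 1) (P.code x) (P.T^[n + 1] x)
        = P.phibarJ (P.code x 0) (P.phibarComp n (P.code (P.T x)) (P.T^[n] (P.T x))) := by
      rw [Function.iterate_succ_apply, P.code_T]
      rfl
    rw [e, ih (P.T_mem_Icc_diff_S hx), P.T_eq hj hxj]
    exact P.phibarJ_f hj (Ioo_subset_Icc_self hxj)

section Itinerary

variable {w : ℕ → ℕ}

lemma phibarComp_monotone_or_antitone (hw : ∀ i, w i < P.k) (n : ℕ) :
    Monotone (P.phibarComp n w) ∨ Antitone (P.phibarComp n w) := by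
  induction n generalizing w with
  | zero => exact .inl fun _ _ h => h
  | succ n ih =>
    change Monotone (P.phibarJ (w 0) ∘ P.phibarComp n fun i => w (i + 1)) ∨
      Antitone (P.phibarJ (w 0) ∘ P.phibarComp n fun i => w (i + 1))
    rcases P.phibarJ_monotone_or_antitone (hw 0) with h₁ | h₁ <;>
      rcases ih fun i => hw (i + 1) with h₂ | h₂
    exacts [.inl (h₁.comp h₂), .inr (h₁.comp_antitone h₂), .inr (h₁.comp_monotone h₂),
      .inl (h₁.comp h₂)]

lemma phibarComp_mem_uIcc (hw : ∀ i, w i < P.k) (n : ℕ) {t : ℝ} (ht : t ∈ Icc (0 : ℝ) 1) :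
    P.phibarComp n w t ∈ uIcc (P.phibarComp n w 0) (P.phibarComp n w 1) := by
  rw [← uIcc_of_le zero_le_one] at ht
  rcases P.phibarComp_monotone_or_antitone hw n with h | h
  · exact (h.monotoneOn _).mapsTo_uIcc ht
  · exact (h.antitoneOn _).mapsTo_uIcc ht

lemma uIcc_phibarComp_succ_subset (hw : ∀ i, w i < P.k) (n : ℕ) :
    uIcc (P.phibarComp (n + 1) w 0) (P.phibarComp (n + 1) w 1) ⊆
      uIcc (P.phibarComp n w 0) (P.phibarComp n w 1) := by
  rw [P.phibarComp_succ', P.phibarComp_succ']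
  exact uIcc_subset_uIcc
    (P.phibarComp_mem_uIcc hw n (P.Icc_a_subset (hw n) (P.phibarJ_mem_Icc (hw n) 0)))
    (P.phibarComp_mem_uIcc hw n (P.Icc_a_subset (hw n) (P.phibarJ_mem_Icc (hw n) 1)))

lemma iterate_mem_I_of_forall_mem_uIoo (hw : ∀ i, w i < P.k) {y : ℝ}
    (hy : ∀ n, y ∈ uIoo (P.phibarComp n w 0) (P.phibarComp n w 1)) (m : ℕ) :
    P.T^[m] y ∈ P.I (w m) := by
  induction m generalizing w y with
  | zero => exact (P.mem_I_and_f_mem_uIoo (hw 0) (hy 1)).1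
  | succ m ih =>
    have hstep n := P.mem_I_and_f_mem_uIoo (hw 0) (hy (n + 1))
    rw [Function.iterate_succ_apply, P.T_eq (hw 0) (hstep 0).1]
    exact ih (fun i => hw (i + 1)) fun n => (hstep n).2

lemma mem_Icc_diff_S_of_forall_mem_uIoo (hw : ∀ i, w i < P.k) {y : ℝ}
    (hy : ∀ n, y ∈ uIoo (P.phibarComp n w 0) (P.phibarComp n w 1)) :
    y ∈ Icc (0 : ℝ) 1 \ P.S :=
  P.mem_Icc_diff_S_iff.2 fun m => ⟨w m, hw m, P.iterate_mem_I_of_forall_mem_uIoo hw hy m⟩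

end Itinerary

lemma valid_of_dense (hd : Icc (0 : ℝ) 1 ⊆ closure P.S) : P.Valid := by
  intro x hx
  have hw n := (P.code_spec hx n).1
  set L := fun n => P.phibarComp n (P.code x) 0 ⊓ P.phibarComp n (P.code x) 1
  set R := fun n => P.phibarComp n (P.code x) 0 ⊔ P.phibarComp n (P.code x) 1
  have hnest n : L n ≤ L (n + 1) ∧ R (n + 1) ≤ R n :=
    (Icc_subset_Icc_iff inf_le_sup).1 (P.uIcc_phibarComp_succ_subset hw n)
  have hLRx n : L n ≤ x ∧ x ≤ R n := by
    have h := P.phibarComp_mem_uIcc hw n (P.I_subset_Icc (hw n) (P.code_spec hx n).2)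
    rwa [P.phibarComp_code_iterate hx] at h
  have hgap u v (huv : ∀ n, L n ≤ u ∧ v ≤ R n) : v ≤ u := by
    by_contra! hlt
    have hfree : Ioo u v ⊆ Icc (0 : ℝ) 1 \ P.S := fun y hy =>
      P.mem_Icc_diff_S_of_forall_mem_uIoo hw fun n =>
        ⟨(huv n).1.trans_lt hy.1, hy.2.trans_le (huv n).2⟩
    have hmid : (u + v) / 2 ∈ Ioo u v := ⟨by linarith, by linarith⟩
    obtain ⟨y, hy, hyS⟩ := mem_closure_iff.1 (hd (hfree hmid).1) _ isOpen_Ioo hmid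
    exact (hfree hy).2 hyS
  obtain ⟨hL, hR⟩ := tendsto_of_monotone_of_antitone_of_gap
    (monotone_nat_of_le_succ fun n => (hnest n).1) (antitone_nat_of_succ_le fun n => (hnest n).2)
    hLRx hgap
  simpa only [P.phibarN_eq_phibarComp] using
    tendsto_of_tendsto_of_tendsto_of_le_of_le hL hR (fun _ => inf_le_left) fun _ => le_sup_left

lemma exists_subset_I_of_isPreconnected {s : Set ℝ} (hs : IsPreconnected s) {y : ℝ}
    (hy : y ∈ s) (hsub : ∀ z ∈ s, ∃ i < P.k, z ∈ P.I i) : ∃ j < P.k, s ⊆ P.I j := by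
  obtain ⟨j, hj, hyj⟩ := hsub y hy
  refine ⟨j, hj, hs.subset_left_of_subset_union (v := ⋃ i ∈ {i | i < P.k ∧ i ≠ j}, P.I i)
    isOpen_Ioo (isOpen_biUnion fun _ _ => isOpen_Ioo) ?_ ?_ ⟨y, hy, hyj⟩⟩
  · refine disjoint_iUnion₂_right.2 fun i hi => disjoint_left.2 fun z hzj hzi => ?_
    exact hi.2 (P.eq_of_mem_I hi.1 hj hzi hzj)
  · intro z hz
    obtain ⟨i, hi, hzi⟩ := hsub z hz
    by_cases hij : i = j
    · exact .inl (hij ▸ hzi)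
    · exact .inr (mem_biUnion ⟨hi, hij⟩ hzi)

lemma exists_mapsTo_iterate_I {C : Set ℝ} (hC : IsPreconnected C) {y : ℝ} (hy : y ∈ C)
    (hCS : C ⊆ Icc (0 : ℝ) 1 \ P.S) (n : ℕ) : ∃ j < P.k, MapsTo P.T^[n] C (P.I j) := by
  have key n (hn : ContinuousOn P.T^[n] C) : ∃ j < P.k, MapsTo P.T^[n] C (P.I j) := by
    obtain ⟨j, hj, hsub⟩ := P.exists_subset_I_of_isPreconnected (hC.image _ hn)
      (mem_image_of_mem _ hy) (by
        rintro _ ⟨z, hz, rfl⟩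
        exact P.mem_Icc_diff_S_iff.1 (hCS hz) n)
    exact ⟨j, hj, fun z hz => hsub (mem_image_of_mem _ hz)⟩
  refine key n ?_
  induction n with
  | zero => exact continuousOn_id
  | succ n ih =>
    obtain ⟨j, hj, hmaps⟩ := key n ih
    rw [Function.iterate_succ']
    exact (P.continuousOn_T hj).comp ih hmaps

lemma code_eq_of_isPreconnected {C : Set ℝ} (hC : IsPreconnected C)
    (hCS : C ⊆ Icc (0 : ℝ) 1 \ P.S) {y y' : ℝ} (hy : y ∈ C) (hy' : y' ∈ C) :
    P.code y = P.code y' := by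
  funext n
  obtain ⟨j, hj, hmaps⟩ := P.exists_mapsTo_iterate_I hC hy hCS n
  rw [code, code, P.idx_eq hj (hmaps hy), P.idx_eq hj (hmaps hy')]

lemma dense_of_valid (hV : P.Valid) : Icc (0 : ℝ) 1 ⊆ closure P.S := by
  intro x hx
  by_contra hxS
  have hx' : x ∈ Ioo (0 : ℝ) 1 :=
    ⟨hx.1.lt_of_ne fun h => hxS (h ▸ subset_closure P.zero_mem_S),
      hx.2.lt_of_ne fun h => hxS (h ▸ subset_closure P.one_mem_S)⟩
  obtain ⟨l, u, ⟨hl, hu⟩, hsub⟩ := mem_nhds_iff_exists_Ioo_subset.1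
    (inter_mem (isOpen_Ioo.mem_nhds hx') (isClosed_closure.isOpen_compl.mem_nhds hxS))
  have hfree : Ioo l u ⊆ Icc (0 : ℝ) 1 \ P.S := fun y hy =>
    ⟨Ioo_subset_Icc_self (hsub hy).1, fun h => (hsub hy).2 (subset_closure h)⟩
  have hy : (l + x) / 2 ∈ Ioo l u := ⟨by linarith, by linarith⟩
  have hcode := P.code_eq_of_isPreconnected isPreconnected_Ioo hfree hy ⟨hl, hu⟩
  have h := hV _ (hfree hy)
  rw [hcode] at h
  have := tendsto_nhds_unique h (hV x (hfree ⟨hl, hu⟩))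
  linarith

lemma phiIdx_add_f {j : ℕ} (hj : j < P.k) {y : ℝ} (hy : y ∈ P.I j) :
    P.phiIdx (j + P.f j y) = j := by
  have hex : ∃ i, i < P.k ∧ (j : ℝ) + P.f j y - i ∈ P.f i '' P.I i :=
    ⟨j, hj, by simpa using mem_image_of_mem (P.f j) hy⟩
  rw [phiIdx, dif_pos hex]
  obtain ⟨hi, z, hz, hfz⟩ := hex.choose_spec
  have h₁ := P.f_mem_Ioo_zero_one hi hz
  have h₂ := P.f_mem_Ioo_zero_one hj hy
  rw [hfz] at h₁
  have hlt : (hex.choose : ℝ) < j + 1 := by linarith [h₁.1, h₂.2]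
  have hgt : (j : ℝ) < hex.choose + 1 := by linarith [h₁.2, h₂.1]
  exact_mod_cast (Nat.lt_succ_iff.1 (by exact_mod_cast hlt)).antisymm
    (Nat.lt_succ_iff.1 (by exact_mod_cast hgt))

lemma phiMap_add_f {j : ℕ} (hj : j < P.k) {y : ℝ} (hy : y ∈ P.I j) :
    P.phiMap (j + P.f j y) = y := by
  rw [phiMap, P.phiIdx_add_f hj hy, add_sub_cancel_left, P.g_inv j hj y (Ioo_subset_Icc_self hy)]

lemma abs_sub_le_mul_abs_f_sub {φ' : ℝ → ℝ} {c : ℝ}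
    (hφ : ∀ x ∈ P.domPhi, HasDerivWithinAt P.phiMap (φ' x) P.domPhi x ∧ |φ' x| ≤ c)
    {j : ℕ} (hj : j < P.k) {s s' : ℝ} (hs : s ∈ P.I j) (hs' : s' ∈ P.I j) :
    |s - s'| ≤ c * |P.f j s - P.f j s'| := by
  set D := (fun y => (j : ℝ) + P.f j y) '' P.I j
  have hD : D ⊆ P.domPhi := by
    rintro _ ⟨y, hy, rfl⟩
    exact mem_biUnion (Finset.mem_range.2 hj) ⟨P.f j y, mem_image_of_mem _ hy, rfl⟩
  have hconv : Convex ℝ D := (isPreconnected_Ioo.image _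
    ((continuousOn_const.add (P.f_cont j hj)).mono Ioo_subset_Icc_self)).convex
  have h := hconv.norm_image_sub_le_of_norm_hasDerivWithin_le
    (fun x hx => (hφ x (hD hx)).1.mono hD) (fun x hx => (hφ x (hD hx)).2)
    (mem_image_of_mem _ hs') (mem_image_of_mem _ hs)
  simpa [P.phiMap_add_f hj hs, P.phiMap_add_f hj hs', Real.norm_eq_abs] using h

lemma abs_phibarJ_sub_le {c : ℝ} (hc : 0 ≤ c) {j : ℕ} (hj : j < P.k)
    (hf : ∀ s ∈ Icc (P.a j) (P.a (j + 1)), ∀ s' ∈ Icc (P.a j) (P.a (j + 1)),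
      |s - s'| ≤ c * |P.f j s - P.f j s'|) (t t' : ℝ) :
    |P.phibarJ j t - P.phibarJ j t'| ≤ c * |t - t'| :=
  calc |P.phibarJ j t - P.phibarJ j t'|
      ≤ c * |P.f j (P.phibarJ j t) - P.f j (P.phibarJ j t')| :=
        hf _ (P.phibarJ_mem_Icc hj t) _ (P.phibarJ_mem_Icc hj t')
    _ = c * |P.clampJ j t - P.clampJ j t'| := by rw [P.f_phibarJ hj, P.f_phibarJ hj]
    _ ≤ c * |t - t'| := mul_le_mul_of_nonneg_left (P.abs_clampJ_sub_le j t t') hc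

lemma abs_phibarComp_sub_le {c : ℝ} (hc : 0 ≤ c)
    (hφ : ∀ j < P.k, ∀ t t', |P.phibarJ j t - P.phibarJ j t'| ≤ c * |t - t'|)
    {w : ℕ → ℕ} (hw : ∀ i, w i < P.k) (n : ℕ) (t t' : ℝ) :
    |P.phibarComp n w t - P.phibarComp n w t'| ≤ c ^ n * |t - t'| := by
  induction n generalizing w with
  | zero => simp [phibarComp]
  | succ n ih =>
    calc |P.phibarComp (n + 1) w t - P.phibarComp (n + 1) w t'|
        ≤ c * |P.phibarComp n (fun i => w (i + 1)) t - P.phibarComp n (fun i => w (i + 1)) t'| :=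
          hφ _ (hw 0) _ _
      _ ≤ c * (c ^ n * |t - t'|) := mul_le_mul_of_nonneg_left (ih fun i => hw (i + 1)) hc
      _ = c ^ (n + 1) * |t - t'| := by ring

lemma valid_of_contraction {φ' : ℝ → ℝ} {c : ℝ} (hc1 : c < 1)
    (hφ' : ∀ x ∈ P.domPhi, HasDerivWithinAt P.phiMap (φ' x) P.domPhi x ∧ |φ' x| ≤ c) :
    P.Valid := by
  have hbranch j (hj : j < P.k) := abs_sub_le_mul_abs_sub_of_Ioo (P.a_lt_a_succ hj)
    (P.f_cont j hj) fun s hs s' hs' => P.abs_sub_le_mul_abs_f_sub hφ' hj hs hs'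
  have hk : 0 < P.k := zero_lt_two.trans_le P.two_le_k
  have hc : 0 ≤ c := by
    have hab := P.a_lt_a_succ hk
    have h := hbranch 0 hk _ (left_mem_Icc.2 hab.le) _ (right_mem_Icc.2 hab.le)
    exact (pos_of_mul_pos_left ((abs_pos.2 (sub_ne_zero.2 hab.ne)).trans_le h)
      (abs_nonneg _)).le
  have hφ j (hj : j < P.k) := P.abs_phibarJ_sub_le hc hj (hbranch j hj)
  intro x hx
  have hbound n : |P.phibarN n (P.code x) - x| ≤ c ^ n := by
    have hT := P.I_subset_Icc (P.code_spec hx n).1 (P.code_spec hx n).2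
    calc |P.phibarN n (P.code x) - x|
        = |P.phibarComp n (P.code x) 0 - P.phibarComp n (P.code x) (P.T^[n] x)| := by
          rw [P.phibarN_eq_phibarComp, P.phibarComp_code_iterate hx]
      _ ≤ c ^ n * |0 - P.T^[n] x| :=
          P.abs_phibarComp_sub_le hc hφ (fun i => (P.code_spec hx i).1) n _ _
      _ ≤ c ^ n := mul_le_of_le_one_right (pow_nonneg hc n) (by
          rw [zero_sub, abs_neg, abs_of_nonneg hT.1]
          exact hT.2)
  exact tendsto_sub_nhds_zero_iff.1
    (squeeze_zero_norm hbound (tendsto_pow_atTop_nhds_zero_of_lt_one hc hc1))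

end PMS

/-- **Validity criterion via density (Parry).** In the piecewise monotone setting, the
φ-expansion is valid if and only if the set `S` is dense in `[0,1]`. Moreover, if `φ`
is differentiable on its domain and `sup |φ′| < 1`, then the φ-expansion is valid. -/
theorem validity_iff_dense (P : PMS) :
    (P.Valid ↔ Set.Icc (0 : ℝ) 1 ⊆ closure P.S) ∧
    (∀ φ' : ℝ → ℝ, ∀ c : ℝ, c < 1 →
      (∀ x ∈ P.domPhi, HasDerivWithinAt P.phiMap (φ' x) P.domPhi x ∧ |φ' x| ≤ c) →
      P.Valid) :=
  ⟨⟨P.dense_of_valid, P.valid_of_dense⟩, fun _ _ hc1 hφ' => P.valid_of_contraction hc1 hφ'⟩
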